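/- arXiv:1809.09801 — 2 statements merged into one kernel-verified Lean document; each statement's English description precedes it below -/
import Mathlib

section
/- Let u, w ≥ 2 be integers, let Q be the set of partitions of w (written as tuples of length w with non-negative, non-increasing entries summing to w), and let Q_u = {(u·q | 0_{uw-w}) : q ∈ Q} ∪ {1_{uw}}, where u·q multiplies each component by u, the tuple is padded with zeros to length n = uw, and 1_n is the all-ones vector of length n. Let Q̃_u be the set of all coordinate permutations of elements of Q_u. Then the minimum Manhattan distance between distinct elements of Q̃_u is at least 2u whenever w ≥ 2. -/
/-- `q : Fin w → ℕ` is a partition of `w` written as a non-increasing tuple of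
length `w` of non-negative integers summing to `w`. -/
def IsPartitionTuple (w : ℕ) (q : Fin w → ℕ) : Prop :=
  Antitone q ∧ ∑ i, q i = w

/-- The set `Q_u ⊆ ℕ^{uw}`: the scaled, zero-padded partitions `(u·q | 0_{uw-w})`
for partitions `q` of `w`, together with the all-ones vector `1_{uw}`. -/
def Qu (u w : ℕ) : Set (Fin (u * w) → ℕ) :=
  {x | (∃ q : Fin w → ℕ, IsPartitionTuple w q ∧
          x = fun i : Fin (u * w) => if h : (i : ℕ) < w then u * q ⟨i, h⟩ else 0) ∨
       x = fun _ => 1}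

/-- `Q̃_u`: all coordinate permutations of elements of `Q_u`. -/
def QuTilde (u w : ℕ) : Set (Fin (u * w) → ℕ) :=
  {y | ∃ x ∈ Qu u w, ∃ π : Equiv.Perm (Fin (u * w)), y = x ∘ π}

section Helpers

variable {u w : ℕ}

/-- Sum of a scaled padded partition. -/
lemma partSum (hu : 1 ≤ u) (q : Fin w → ℕ) (hq : ∑ i, q i = w) :
    ∑ i : Fin (u * w), (if h : (i : ℕ) < w then u * q ⟨i, h⟩ else 0) = u * w := by
  have hle : w ≤ u * w := Nat.le_mul_of_pos_left w hu
  have e : Fin w ↪ Fin (u * w) := (Fin.castLEEmb hle)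
  rw [← Finset.sum_subset (Finset.subset_univ ((Finset.univ : Finset (Fin w)).map (Fin.castLEEmb hle)))]
  · rw [Finset.sum_map]
    have : ∀ i : Fin w, (if h : ((Fin.castLEEmb hle) i : ℕ) < w then u * q ⟨_, h⟩ else 0) = u * q i := by
      intro i
      simp [Fin.castLEEmb, i.isLt]
    rw [Finset.sum_congr rfl fun i _ => this i, ← Finset.mul_sum, hq]
  · intro i _ hi
    rw [dif_neg]
    intro h
    exact hi (Finset.mem_map.mpr ⟨⟨i, h⟩, Finset.mem_univ _, rfl⟩)

/-- Case: both are (permuted) scaled partitions. -/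
lemma bothPart (hu : 2 ≤ u) (n : ℕ) (y z : Fin n → ℕ)
    (hdy : ∀ j, (u : ℕ) ∣ y j) (hdz : ∀ j, (u : ℕ) ∣ z j)
    (hsum : ∑ j, (y j : ℤ) = ∑ j, (z j : ℤ)) (hne : y ≠ z) :
    (2 * u : ℤ) ≤ ∑ j, |(y j : ℤ) - (z j : ℤ)| := by
  obtain ⟨j1, hj1⟩ := Function.ne_iff.mp hne
  have hdvd : ∀ j, (u : ℤ) ∣ ((y j : ℤ) - z j) := fun j =>
    dvd_sub (Int.natCast_dvd_natCast.mpr (hdy j)) (Int.natCast_dvd_natCast.mpr (hdz j))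
  have key : ∀ j, y j ≠ z j → (u : ℤ) ≤ |(y j : ℤ) - z j| := by
    intro j hj
    have hd0 : ((y j : ℤ) - z j) ≠ 0 := by
      intro h; exact hj (by exact_mod_cast sub_eq_zero.mp h)
    exact Int.le_of_dvd (abs_pos.mpr hd0) ((dvd_abs _ _).mpr (hdvd j))
  -- find a second differing coordinate
  have ⟨j2, hj2ne, hj2⟩ : ∃ j2, j2 ≠ j1 ∧ y j2 ≠ z j2 := by
    by_contra hcon
    push_neg at hcon
    have hsum' : ∑ j ∈ Finset.univ.erase j1, (y j : ℤ) =
        ∑ j ∈ Finset.univ.erase j1, (z j : ℤ) := by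
      refine Finset.sum_congr rfl fun j hj => ?_
      rw [hcon j (Finset.mem_erase.mp hj).1]
    have h1 := Finset.add_sum_erase Finset.univ (fun j => (y j : ℤ)) (Finset.mem_univ j1)
    have h2 := Finset.add_sum_erase Finset.univ (fun j => (z j : ℤ)) (Finset.mem_univ j1)
    have : (y j1 : ℤ) = z j1 := by linarith [hsum]
    exact hj1 (by exact_mod_cast this)
  have hpair : ({j2, j1} : Finset (Fin n)) ⊆ Finset.univ := Finset.subset_univ _
  calc (2 * u : ℤ) = u + u := by ring
    _ ≤ |(y j2 : ℤ) - z j2| + |(y j1 : ℤ) - z j1| := add_le_add (key j2 hj2) (key j1 hj1)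
    _ = ∑ j ∈ ({j2, j1} : Finset (Fin n)), |(y j : ℤ) - z j| := by
        rw [Finset.sum_pair hj2ne]
    _ ≤ ∑ j, |(y j : ℤ) - z j| :=
        Finset.sum_le_sum_of_subset_of_nonneg hpair (fun j _ _ => abs_nonneg _)

/-- Case: distance of a sparse vector to all-ones. -/
lemma toOnes (hu : 2 ≤ u) (hw : 2 ≤ w) (y : Fin (u * w) → ℕ)
    (hsum : ∑ j, (y j : ℤ) = u * w)
    (hcard : (Finset.univ.filter (fun j => y j ≠ 0)).card ≤ w) :
    (2 * u : ℤ) ≤ ∑ j, |(y j : ℤ) - 1| := by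
  classical
  set S := Finset.univ.filter (fun j => y j ≠ 0) with hS
  have hsplit : ∑ j, |(y j : ℤ) - 1| = ∑ j ∈ S, |(y j : ℤ) - 1| + ∑ j ∈ Sᶜ, |(y j : ℤ) - 1| :=
    (Finset.sum_add_sum_compl S _).symm
  have hZ : ∀ j ∈ Sᶜ, |(y j : ℤ) - 1| = 1 := by
    intro j hj
    have : y j = 0 := by
      have := Finset.mem_compl.mp hj
      simpa [hS] using this
    simp [this]
  have hS1 : ∀ j ∈ S, |(y j : ℤ) - 1| = (y j : ℤ) - 1 := by
    intro j hj
    have : y j ≠ 0 := by simpa [hS] using (Finset.mem_filter.mp hj).2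
    have : (1 : ℤ) ≤ (y j : ℤ) := by exact_mod_cast Nat.one_le_iff_ne_zero.mpr this
    rw [abs_of_nonneg]; linarith
  have hsumS : ∑ j ∈ S, (y j : ℤ) = u * w := by
    rw [← hsum]
    refine (Finset.sum_subset (f := fun j => (y j : ℤ)) (Finset.subset_univ S) ?_)
    intro j _ hj
    have : y j = 0 := by
      by_contra h
      exact hj (Finset.mem_filter.mpr ⟨Finset.mem_univ _, h⟩)
    simp [this]
  have hcards : (S.card : ℤ) + (Sᶜ.card : ℤ) = u * w := by
    have := Finset.card_add_card_compl S
    have h2 : (S.card + Sᶜ.card : ℕ) = u * w := by simpa [Fintype.card_fin] using this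
    exact_mod_cast h2
  have comp : ∑ j, |(y j : ℤ) - 1| = 2 * (Sᶜ.card : ℤ) := by
    have e1 : ∑ j ∈ S, |(y j : ℤ) - 1| = ∑ j ∈ S, ((y j : ℤ) - 1) := Finset.sum_congr rfl hS1
    have e2 : ∑ j ∈ Sᶜ, |(y j : ℤ) - 1| = ∑ j ∈ Sᶜ, (1 : ℤ) := Finset.sum_congr rfl hZ
    rw [hsplit, e1, e2, Finset.sum_sub_distrib, hsumS, Finset.sum_const, Finset.sum_const]
    simp only [nsmul_eq_mul, mul_one]
    linarith
  have hSc : (w : ℤ) * (u - 1) ≤ (Sᶜ.card : ℤ) := by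
    have : (Sᶜ.card : ℤ) = u * w - S.card := by linarith
    have hc : (S.card : ℤ) ≤ w := by exact_mod_cast hcard
    rw [this]; nlinarith
  rw [comp]
  have hu' : (2 : ℤ) ≤ u := by exact_mod_cast hu
  have hw' : (2 : ℤ) ≤ w := by exact_mod_cast hw
  nlinarith

end Helpers

section Helpers2

variable {u w : ℕ}

lemma scaledDvd (q : Fin w → ℕ) (i : Fin (u * w)) :
    u ∣ (if h : (i : ℕ) < w then u * q ⟨i, h⟩ else 0) := by
  split <;> simp

lemma cardBound (hu : 1 ≤ u) (hw : 1 ≤ w) (q : Fin w → ℕ) (π : Equiv.Perm (Fin (u * w))) :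
    (Finset.univ.filter (fun j : Fin (u * w) =>
      (if h : ((π j : Fin (u * w)) : ℕ) < w then u * q ⟨π j, h⟩ else 0) ≠ 0)).card ≤ w := by
  have hwpos : 0 < w := hw
  have key : ∀ j ∈ (Finset.univ.filter (fun j : Fin (u * w) =>
      (if h : ((π j : Fin (u * w)) : ℕ) < w then u * q ⟨π j, h⟩ else 0) ≠ 0)),
      ((π j : Fin (u * w)) : ℕ) < w := by
    intro j hj
    have hj' := (Finset.mem_filter.mp hj).2
    by_contra h
    exact hj' (dif_neg h)
  calc _ ≤ (Finset.univ : Finset (Fin w)).card := by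
        apply Finset.card_le_card_of_injOn
          (fun j => (⟨((π j : Fin (u * w)) : ℕ) % w, Nat.mod_lt _ hwpos⟩ : Fin w))
        · intro _ _; exact Finset.mem_univ _
        · intro j1 hj1 j2 hj2 hf
          have h1 := key j1 hj1
          have h2 := key j2 hj2
          have : ((π j1 : Fin (u * w)) : ℕ) % w = ((π j2 : Fin (u * w)) : ℕ) % w :=
            congrArg Fin.val hf
          rw [Nat.mod_eq_of_lt h1, Nat.mod_eq_of_lt h2] at this
          exact π.injective (Fin.ext this)
    _ = w := by simp

end Helpers2


/-- For integers `u, w ≥ 2`, the minimum Manhattan distance between distinct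
elements of `Q̃_u` is at least `2u`. -/
theorem stmt_7 (u w : ℕ) (hu : 2 ≤ u) (hw : 2 ≤ w)
    (y z : Fin (u * w) → ℕ) (hy : y ∈ QuTilde u w) (hz : z ∈ QuTilde u w)
    (hne : y ≠ z) :
    (2 * u : ℤ) ≤ ∑ j, |(y j : ℤ) - (z j : ℤ)| := by
  classical
  have hu1 : 1 ≤ u := le_trans (by norm_num) hu
  have hw1 : 1 ≤ w := le_trans (by norm_num) hw
  obtain ⟨x1, hx1, π1, rfl⟩ := hy
  obtain ⟨x2, hx2, π2, rfl⟩ := hz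
  -- generic facts about a permuted element of Qu
  have hsumQ : ∀ (x : Fin (u * w) → ℕ), x ∈ Qu u w → ∀ π : Equiv.Perm (Fin (u * w)),
      ∑ j, ((x ∘ π) j : ℤ) = (u : ℤ) * w := by
    intro x hx π
    have hperm : ∑ j, ((x ∘ π) j : ℤ) = ∑ j, (x j : ℤ) :=
      Equiv.sum_comp π (fun j => (x j : ℤ))
    rw [hperm]
    rcases hx with ⟨q, ⟨_, hq⟩, rfl⟩ | rfl
    · have := partSum hu1 q hq
      exact_mod_cast this
    · simp [mul_comm]
  rcases hx1 with ⟨q1, ⟨_, hq1⟩, rfl⟩ | rfl <;> rcases hx2 with ⟨q2, ⟨_, hq2⟩, rfl⟩ | rfl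
  · -- both scaled partitions
    apply bothPart hu
    · intro j; exact scaledDvd q1 (π1 j)
    · intro j; exact scaledDvd q2 (π2 j)
    · rw [hsumQ _ (Or.inl ⟨q1, ⟨‹Antitone q1›, hq1⟩, rfl⟩) π1,
          hsumQ _ (Or.inl ⟨q2, ⟨‹Antitone q2›, hq2⟩, rfl⟩) π2]
    · exact hne
  · -- y partition, z all-ones
    calc (2 * u : ℤ) ≤ ∑ j, |((((fun i : Fin (u * w) => if h : (i : ℕ) < w then u * q1 ⟨i, h⟩ else 0) ∘ π1) j : ℕ) : ℤ) - 1| :=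
          toOnes hu hw _ (hsumQ _ (Or.inl ⟨q1, ⟨‹Antitone q1›, hq1⟩, rfl⟩) π1)
            (cardBound hu1 hw1 q1 π1)
      _ = _ := Finset.sum_congr rfl fun j _ => by norm_num [Function.comp]
  · -- y all-ones, z partition
    calc (2 * u : ℤ) ≤ ∑ j, |((((fun i : Fin (u * w) => if h : (i : ℕ) < w then u * q2 ⟨i, h⟩ else 0) ∘ π2) j : ℕ) : ℤ) - 1| :=
          toOnes hu hw _ (hsumQ _ (Or.inl ⟨q2, ⟨‹Antitone q2›, hq2⟩, rfl⟩) π2)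
            (cardBound hu1 hw1 q2 π2)
      _ = _ := Finset.sum_congr rfl fun j _ => by
          rw [abs_sub_comm]; norm_num [Function.comp]
  · exact absurd rfl hne
end

section
/- Let q = (q_1, ..., q_n) be a vector of non-negative integers interpreted as bins of indistinguishable balls, let h ≥ 1 and w > h. Then C(n - h, w - h) times the number of ways to pick h balls from exactly h distinct bins of q equals the sum over all ways of picking w balls from at least h distinct bins of q of the number of ways of picking h of those w balls coming from exactly h bins, with coefficients depending only on the partition type of the selection and not on q. -/
/-!
Fix a set `S` of `h` bins. Weighting each selection `k` of `w` balls by `∏_{i ∈ S} k i` counts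
selections together with one marked ball in every bin of `S`. Choosing the marked balls first
(`∏_{i ∈ S} q i` ways) and then the remaining `w - h` balls among the other `Σ q - h` (multivariate
Vandermonde) shows that this weighted count is `C(Σ q - h, w - h) · ∏_{i ∈ S} q i`. Summing over
all `S` with `|S| = h` and exchanging the sums gives the identity; `S` may be restricted to the
support of `k`, since the other `S` contribute `0`.
-/

open Finset

theorem Nat.choose_succ_mul_succ (q k : ℕ) : q.choose (k + 1) * (k + 1) = q * (q - 1).choose k := by
  cases q with
  | zero => simp
  | succ q => simpa using (Nat.add_one_mul_choose_eq q k).symm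

theorem Finset.sum_powersetCard_prod_of_subset {ι R : Type*} [CommSemiring R] {s t : Finset ι}
    (hst : s ⊆ t) (f : ι → R) (hf : ∀ i ∈ t, i ∉ s → f i = 0) (h : ℕ) :
    ∑ S ∈ powersetCard h s, ∏ i ∈ S, f i = ∑ S ∈ powersetCard h t, ∏ i ∈ S, f i := by
  refine sum_subset (powersetCard_mono hst) fun S hSt hSs => ?_
  rw [mem_powersetCard] at hSt hSs
  obtain ⟨i, hiS, his⟩ := not_subset.mp fun hSs' => hSs ⟨hSs', hSt.2⟩
  exact prod_eq_zero hiS (hf i (hSt.1 hiS) his)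

namespace Finset.Nat

theorem sum_antidiagonalTuple_succ {M : Type*} [AddCommMonoid M] (n m : ℕ)
    (F : (Fin (n + 1) → ℕ) → M) :
    ∑ k ∈ antidiagonalTuple (n + 1) m, F k
      = ∑ p ∈ antidiagonal m, ∑ k ∈ antidiagonalTuple n p.2, F (Fin.cons p.1 k) := by
  simp only [Finset.sum, antidiagonalTuple, Multiset.Nat.antidiagonalTuple,
    List.Nat.antidiagonalTuple]
  rw [Multiset.map_coe, Multiset.sum_coe, List.map_flatMap, List.flatMap_def, List.sum_flatten]
  change _ = (Multiset.map _ ((List.Nat.antidiagonal m : List (ℕ × ℕ)) : Multiset (ℕ × ℕ))).sum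
  simp [List.map_map, Function.comp_def]

theorem sum_antidiagonalTuple_prod_choose (n m : ℕ) (q : Fin n → ℕ) :
    ∑ k ∈ antidiagonalTuple n m, ∏ i, (q i).choose (k i) = (∑ i, q i).choose m := by
  induction n generalizing m with
  | zero => cases m <;> simp
  | succ n ih =>
    rw [sum_antidiagonalTuple_succ, Fin.sum_univ_succ, Nat.add_choose_eq]
    refine sum_congr rfl fun p _ => ?_
    simp only [Fin.prod_univ_succ, Fin.cons_zero, Fin.cons_succ]
    rw [← mul_sum, ih]

theorem sum_antidiagonalTuple_eq_sum_add {M : Type*} [AddCommMonoid M] {n m : ℕ}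
    (e : Fin n → ℕ) (he : ∑ i, e i ≤ m) (F : (Fin n → ℕ) → M) (hF : ∀ k, ¬ e ≤ k → F k = 0) :
    ∑ k ∈ antidiagonalTuple n m, F k = ∑ k ∈ antidiagonalTuple n (m - ∑ i, e i), F (k + e) := by
  classical
  rw [← sum_filter_of_ne fun k _ hk => not_not.mp (mt (hF k) hk)]
  refine sum_nbij' (· - e) (· + e) (fun k hk => ?_) (fun k hk => ?_)
    (fun k hk => tsub_add_cancel_of_le (mem_filter.mp hk).2) (fun k _ => add_tsub_cancel_right k e)
    (fun k hk => by rw [tsub_add_cancel_of_le (mem_filter.mp hk).2])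
  · obtain ⟨hk, hek⟩ := mem_filter.mp hk
    rw [mem_antidiagonalTuple] at hk ⊢
    simp only [Pi.sub_apply, sum_tsub_distrib _ fun i _ => hek i, hk]
  · rw [mem_antidiagonalTuple] at hk
    rw [mem_filter, mem_antidiagonalTuple]
    refine ⟨?_, le_add_self⟩
    simp only [Pi.add_apply, sum_add_distrib, hk]
    omega

theorem sum_antidiagonalTuple_prod_choose_mul_prod {n w : ℕ} (q : Fin n → ℕ)
    (S : Finset (Fin n)) (hSw : #S ≤ w) :
    ∑ k ∈ antidiagonalTuple n w, (∏ i, (q i).choose (k i)) * ∏ i ∈ S, k i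
      = ((∑ i, q i) - #S).choose (w - #S) * ∏ i ∈ S, q i := by
  set e : Fin n → ℕ := fun i => if i ∈ S then 1 else 0
  have he : ∑ i, e i = #S := by simp [e]
  have hvanish (k : Fin n → ℕ) (hk : ¬ e ≤ k) : (∏ i, (q i).choose (k i)) * ∏ i ∈ S, k i = 0 := by
    obtain ⟨i, hi⟩ : ∃ i, k i < e i := by simpa [Pi.le_def] using hk
    by_cases hiS : i ∈ S
    · exact mul_eq_zero_of_right _ (prod_eq_zero hiS (by simp [e, hiS] at hi; omega))
    · simp [e, hiS] at hi
  have hterm (k : Fin n → ℕ) :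
      (∏ i, (q i).choose ((k + e) i)) * ∏ i ∈ S, (k + e) i
        = (∏ i ∈ S, q i) * ∏ i, (q i - e i).choose (k i) := by
    rw [← prod_ite_mem_eq S (fun i => (k + e) i), ← prod_ite_mem_eq S q, ← prod_mul_distrib,
      ← prod_mul_distrib]
    refine prod_congr rfl fun i _ => ?_
    by_cases hi : i ∈ S <;> simp [e, hi, Nat.choose_succ_mul_succ]
  rw [sum_antidiagonalTuple_eq_sum_add e (he ▸ hSw) _ hvanish, he]
  simp only [hterm, ← mul_sum, sum_antidiagonalTuple_prod_choose]
  rw [mul_comm]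
  -- `∑ (q - e) = ∑ q - #S` fails under truncated subtraction only when some `q i = 0` on `S`.
  by_cases hq : ∃ i ∈ S, q i = 0
  · obtain ⟨i, hi, hqi⟩ := hq
    simp [prod_eq_zero hi hqi]
  · push Not at hq
    have heq : ∀ i ∈ univ, e i ≤ q i := fun i _ => by
      by_cases hi : i ∈ S
      · simpa [e, hi, Nat.one_le_iff_ne_zero] using hq i hi
      · simp [e, hi]
    rw [sum_tsub_distrib _ heq, he]

end Finset.Nat

theorem stmt_16_general (n h w : ℕ) (hw : h < w) (q : Fin n → ℕ) :
    ((∑ i, q i) - h).choose (w - h) *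
        (∑ S ∈ Finset.powersetCard h (Finset.univ : Finset (Fin n)),
          ∏ i ∈ S, q i)
      = ∑ k ∈ (Finset.Nat.antidiagonalTuple n w).filter
            (fun k => h ≤ (Finset.univ.filter fun i => k i ≠ 0).card),
          (∏ i, (q i).choose (k i)) *
            (∑ S ∈ Finset.powersetCard h (Finset.univ.filter fun i => k i ≠ 0),
              ∏ i ∈ S, k i) := by
  rw [sum_filter_of_ne fun k _ hk => not_lt.mp fun hlt => hk (by
    rw [powersetCard_eq_empty.mpr hlt, sum_empty, mul_zero])]
  have hsupp (k : Fin n → ℕ) :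
      ∑ S ∈ powersetCard h (univ.filter fun i => k i ≠ 0), ∏ i ∈ S, k i
        = ∑ S ∈ powersetCard h univ, ∏ i ∈ S, k i :=
    sum_powersetCard_prod_of_subset (subset_univ _) k (by simp) h
  simp only [hsupp, mul_sum]
  rw [sum_comm]
  refine sum_congr rfl fun S hS => ?_
  obtain ⟨-, rfl⟩ := mem_powersetCard.mp hS
  exact (Nat.sum_antidiagonalTuple_prod_choose_mul_prod q S hw.le).symm

/-- The overcounting identity of Proposition 4: for bins `q ∈ ℕ^n` and
`1 ≤ h < w`,
`C(Σq - h, w - h) · N_h(q) = Σ_{wt(k)=w, |supp k| ≥ h} (∏ C(q_i,k_i)) · d(k,h)`,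
where `N_h(q) = Σ_{|S|=h} ∏_{i∈S} q_i` counts ways to pick `h` balls from
exactly `h` distinct bins, and `d(k,h) = Σ_{S ⊆ supp k, |S|=h} ∏_{i∈S} k_i`. -/
theorem stmt_16 (n h w : ℕ) (hh : 1 ≤ h) (hw : h < w) (q : Fin n → ℕ) :
    ((∑ i, q i) - h).choose (w - h) *
        (∑ S ∈ Finset.powersetCard h (Finset.univ : Finset (Fin n)),
          ∏ i ∈ S, q i)
      = ∑ k ∈ (Finset.Nat.antidiagonalTuple n w).filter
            (fun k => h ≤ (Finset.univ.filter fun i => k i ≠ 0).card),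
          (∏ i, (q i).choose (k i)) *
            (∑ S ∈ Finset.powersetCard h (Finset.univ.filter fun i => k i ≠ 0),
              ∏ i ∈ S, k i) :=
  stmt_16_general n h w hw q
end
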